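/- Let d ≥ 1 and let μ, e, ε > 0 be constants. Let ρ : ℝ×ℝ^d → ℝ be C² with ρ > 0 everywhere, u : ℝ×ℝ^d → ℝ^d be C², c⁺, c⁻ : ℝ×ℝ^d → ℝ be C¹ with c⁺ > 0, c⁻ > 0, ψ : ℝ×ℝ^d → ℝ be C² in space, and p : (0,∞) → ℝ be C¹. Assume pointwise: ∂ₜρ + div(ρu) = 0; ∂ₜ(ρuᵢ) + Σⱼ∂ⱼ(ρuᵢuⱼ) + ∂ᵢ(p∘ρ) − 2μΣⱼ∂ⱼ(ρD(u)ᵢⱼ) = ε(Δψ)∂ᵢψ − ∂ᵢ(c⁺+c⁻); and −εΔψ = e(c⁺−c⁻). Set v = μ∇log ρ (spatial gradient). Then for every index i and every point: ∂ₜ( ρ(uᵢ + 2vᵢ) ) + Σⱼ ∂ⱼ( ρ(uᵢ + 2vᵢ)uⱼ ) − 2μ Σⱼ ∂ⱼ( ρ A(u)ᵢⱼ ) + ∂ᵢ(p∘ρ) = −c⁺∂ᵢ(log c⁺ + eψ) − c⁻∂ᵢ(log c⁻ − eψ), where A(u)ᵢⱼ = (∂ⱼuᵢ − ∂ᵢuⱼ)/2.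 -/

import Mathlib

open MeasureTheory

/-- Spatial partial derivative in direction `i` of `g : ℝ^d → ℝ` at `x`. -/
noncomputable def pd (d : ℕ) (i : Fin d) (g : (Fin d → ℝ) → ℝ) (x : Fin d → ℝ) : ℝ :=
  fderiv ℝ g x (Pi.single i 1)

section helpers

variable {d : ℕ}

lemma pd_add {g h : (Fin d → ℝ) → ℝ} {x : Fin d → ℝ} (hg : DifferentiableAt ℝ g x)
    (hh : DifferentiableAt ℝ h x) (i : Fin d) :
    pd d i (fun y => g y + h y) x = pd d i g x + pd d i h x := by
  simp [pd, fderiv_fun_add hg hh]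

lemma pd_sub {g h : (Fin d → ℝ) → ℝ} {x : Fin d → ℝ} (hg : DifferentiableAt ℝ g x)
    (hh : DifferentiableAt ℝ h x) (i : Fin d) :
    pd d i (fun y => g y - h y) x = pd d i g x - pd d i h x := by
  simp [pd, fderiv_fun_sub hg hh]

lemma pd_const_mul {g : (Fin d → ℝ) → ℝ} {x : Fin d → ℝ} (hg : DifferentiableAt ℝ g x)
    (c : ℝ) (i : Fin d) :
    pd d i (fun y => c * g y) x = c * pd d i g x := by
  simp [pd, fderiv_const_mul hg c]

lemma pd_sum {n : ℕ} {g : Fin n → (Fin d → ℝ) → ℝ} {x : Fin d → ℝ}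
    (hg : ∀ j, DifferentiableAt ℝ (g j) x) (i : Fin d) :
    pd d i (fun y => ∑ j, g j y) x = ∑ j, pd d i (g j) x := by
  simp only [pd]
  rw [fderiv_fun_sum (fun j _ => hg j)]
  simp

lemma pd_mul {g h : (Fin d → ℝ) → ℝ} {x : Fin d → ℝ} (hg : DifferentiableAt ℝ g x)
    (hh : DifferentiableAt ℝ h x) (i : Fin d) :
    pd d i (fun y => g y * h y) x = pd d i g x * h x + g x * pd d i h x := by
  simp [pd, fderiv_fun_mul hg hh]; ring

lemma pd_log {g : (Fin d → ℝ) → ℝ} {x : Fin d → ℝ} (hg : DifferentiableAt ℝ g x)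
    (hgx : 0 < g x) (i : Fin d) :
    pd d i (fun y => Real.log (g y)) x = pd d i g x / g x := by
  have h := (Real.hasDerivAt_log hgx.ne').comp_hasFDerivAt x hg.hasFDerivAt
  have h' : HasFDerivAt (fun y => Real.log (g y)) ((g x)⁻¹ • fderiv ℝ g x) x := h
  rw [pd, h'.fderiv]
  simp [pd]
  ring

lemma pd_slice {F : ℝ × (Fin d → ℝ) → ℝ} {t : ℝ} {x : Fin d → ℝ}
    (hF : DifferentiableAt ℝ F (t, x)) (i : Fin d) :
    pd d i (fun y => F (t, y)) x = fderiv ℝ F (t, x) (0, Pi.single i 1) := by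
  have h : HasFDerivAt (fun y => F (t, y))
      ((fderiv ℝ F (t, x)).comp (ContinuousLinearMap.inr ℝ ℝ (Fin d → ℝ))) x :=
    hF.hasFDerivAt.comp x (hasFDerivAt_prodMk_right t x)
  rw [pd, h.fderiv]; rfl

lemma deriv_slice {F : ℝ × (Fin d → ℝ) → ℝ} {t : ℝ} {x : Fin d → ℝ}
    (hF : DifferentiableAt ℝ F (t, x)) :
    deriv (fun s => F (s, x)) t = fderiv ℝ F (t, x) (1, 0) := by
  have h : HasFDerivAt (fun s => F (s, x))
      ((fderiv ℝ F (t, x)).comp (ContinuousLinearMap.inl ℝ ℝ (Fin d → ℝ))) t :=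
    hF.hasFDerivAt.comp t (hasFDerivAt_prodMk_left t x)
  rw [h.hasDerivAt.deriv]; rfl

lemma hasFDerivAt_pd {g : (Fin d → ℝ) → ℝ} (hg : ContDiff ℝ 2 g) (x : Fin d → ℝ) (i : Fin d) :
    HasFDerivAt (fun y => pd d i g y)
      ((fderiv ℝ (fderiv ℝ g) x).flip (Pi.single i 1)) x := by
  have h1 : HasFDerivAt (fderiv ℝ g) (fderiv ℝ (fderiv ℝ g) x) x :=
    (((hg.fderiv_right (m := 1) (by norm_num)).differentiable (by norm_num)) x).hasFDerivAt
  have h2 := h1.clm_apply (hasFDerivAt_const (Pi.single i 1 : Fin d → ℝ) x)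
  simpa [pd] using h2

lemma pd_pd_comm {g : (Fin d → ℝ) → ℝ} (hg : ContDiff ℝ 2 g) (x : Fin d → ℝ) (i j : Fin d) :
    pd d j (fun y => pd d i g y) x = pd d i (fun y => pd d j g y) x := by
  rw [pd, (hasFDerivAt_pd hg x i).fderiv, pd, (hasFDerivAt_pd hg x j).fderiv]
  exact hg.contDiffAt.isSymmSndFDerivAt (by simp) _ _

lemma hasFDerivAt_deriv_slice {F : ℝ × (Fin d → ℝ) → ℝ} (hF : ContDiff ℝ 2 F)
    (t : ℝ) (x : Fin d → ℝ) :
    HasFDerivAt (fun y => deriv (fun s => F (s, y)) t)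
      ((((fderiv ℝ (fderiv ℝ F) (t, x)).comp
          (ContinuousLinearMap.inr ℝ ℝ (Fin d → ℝ))).flip) ((1 : ℝ), (0 : Fin d → ℝ))) x := by
  have hdF : Differentiable ℝ F := hF.differentiable (by norm_num)
  have heq : (fun y => deriv (fun s => F (s, y)) t) = fun y => fderiv ℝ F (t, y) (1, 0) :=
    funext fun y => deriv_slice (hdF _)
  rw [heq]
  have h1 : HasFDerivAt (fderiv ℝ F) (fderiv ℝ (fderiv ℝ F) (t, x)) (t, x) :=
    (((hF.fderiv_right (m := 1) (by norm_num)).differentiable (by norm_num)) _).hasFDerivAt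
  have h2 : HasFDerivAt (fun y => fderiv ℝ F (t, y))
      ((fderiv ℝ (fderiv ℝ F) (t, x)).comp (ContinuousLinearMap.inr ℝ ℝ (Fin d → ℝ))) x :=
    h1.comp x (hasFDerivAt_prodMk_right t x)
  have h3 := h2.clm_apply (hasFDerivAt_const ((1 : ℝ), (0 : Fin d → ℝ)) x)
  simpa using h3

lemma hasDerivAt_pd_mixed {F : ℝ × (Fin d → ℝ) → ℝ} (hF : ContDiff ℝ 2 F) (t : ℝ)
    (x : Fin d → ℝ) (i : Fin d) :
    HasDerivAt (fun s => pd d i (fun y => F (s, y)) x)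
      (pd d i (fun y => deriv (fun s => F (s, y)) t) x) t := by
  have hdF : Differentiable ℝ F := hF.differentiable (by norm_num)
  have heq : (fun s => pd d i (fun y => F (s, y)) x)
      = fun s => fderiv ℝ F (s, x) (0, Pi.single i 1) :=
    funext fun s => pd_slice (hdF _) i
  have h1 : HasFDerivAt (fderiv ℝ F) (fderiv ℝ (fderiv ℝ F) (t, x)) (t, x) :=
    (((hF.fderiv_right (m := 1) (by norm_num)).differentiable (by norm_num)) _).hasFDerivAt
  have h2 : HasFDerivAt (fun s : ℝ => fderiv ℝ F (s, x))
      ((fderiv ℝ (fderiv ℝ F) (t, x)).comp (ContinuousLinearMap.inl ℝ ℝ (Fin d → ℝ))) t :=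
    h1.comp t (hasFDerivAt_prodMk_left t x)
  have h3 := (h2.clm_apply (hasFDerivAt_const ((0 : ℝ), (Pi.single i 1 : Fin d → ℝ)) t)).hasDerivAt
  have hval : pd d i (fun y => deriv (fun s => F (s, y)) t) x
      = fderiv ℝ (fderiv ℝ F) (t, x) (1, 0) (0, Pi.single i 1) := by
    rw [pd, (hasFDerivAt_deriv_slice hF t x).fderiv]
    exact (hF.contDiffAt.isSymmSndFDerivAt (by simp) _ _).symm
  rw [heq, hval]
  simpa using h3

end helpers

/-- the equation satisfied by the effective velocity `u + 2v`
with `v = μ ∇ log ρ`. -/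
theorem stmt6 (d : ℕ) (hd : 1 ≤ d) (μ e ε : ℝ) (hμ : 0 < μ) (he : 0 < e) (hε : 0 < ε)
    (ρ : ℝ → (Fin d → ℝ) → ℝ) (u : ℝ → (Fin d → ℝ) → Fin d → ℝ)
    (cp cm ψ : ℝ → (Fin d → ℝ) → ℝ) (p : ℝ → ℝ)
    (hρ : ContDiff ℝ 2 (fun q : ℝ × (Fin d → ℝ) => ρ q.1 q.2))
    (hρpos : ∀ t x, 0 < ρ t x)
    (hu : ContDiff ℝ 2 (fun q : ℝ × (Fin d → ℝ) => u q.1 q.2))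
    (hcp : ContDiff ℝ 1 (fun q : ℝ × (Fin d → ℝ) => cp q.1 q.2))
    (hcm : ContDiff ℝ 1 (fun q : ℝ × (Fin d → ℝ) => cm q.1 q.2))
    (hcppos : ∀ t x, 0 < cp t x) (hcmpos : ∀ t x, 0 < cm t x)
    (hψ : ∀ t, ContDiff ℝ 2 (ψ t))
    (hp : ContDiffOn ℝ 1 p (Set.Ioi 0))
    (hmass : ∀ t x, deriv (fun s => ρ s x) t
      + ∑ j, pd d j (fun y => ρ t y * u t y j) x = 0)
    (hmom : ∀ t x, ∀ i : Fin d,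
      deriv (fun s => ρ s x * u s x i) t
        + ∑ j, pd d j (fun y => ρ t y * u t y i * u t y j) x
        + pd d i (fun y => p (ρ t y)) x
        - 2 * μ * ∑ j, pd d j (fun y => ρ t y *
            ((pd d j (fun z => u t z i) y + pd d i (fun z => u t z j) y) / 2)) x
      = ε * (∑ j, pd d j (fun y => pd d j (ψ t) y) x) * pd d i (ψ t) x
        - pd d i (fun y => cp t y + cm t y) x)
    (hpois : ∀ t x,
      -(ε * ∑ j, pd d j (fun y => pd d j (ψ t) y) x) = e * (cp t x - cm t x)) :
    ∀ t x, ∀ i : Fin d,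
      deriv (fun s => ρ s x *
          (u s x i + 2 * (μ * pd d i (fun y => Real.log (ρ s y)) x))) t
        + ∑ j, pd d j (fun y => ρ t y *
            (u t y i + 2 * (μ * pd d i (fun z => Real.log (ρ t z)) y)) * u t y j) x
        - 2 * μ * ∑ j, pd d j (fun y => ρ t y *
            ((pd d j (fun z => u t z i) y - pd d i (fun z => u t z j) y) / 2)) x
        + pd d i (fun y => p (ρ t y)) x
      = -(cp t x * pd d i (fun y => Real.log (cp t y) + e * ψ t y) x)
        - cm t x * pd d i (fun y => Real.log (cm t y) - e * ψ t y) x := by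
  intro t x i
  -- smoothness of slices
  have hρsp : ∀ s, ContDiff ℝ 2 (fun y => ρ s y) := fun s =>
    hρ.comp (contDiff_const.prodMk contDiff_id)
  have hucomp : ∀ k : Fin d, ContDiff ℝ 2 (fun q : ℝ × (Fin d → ℝ) => u q.1 q.2 k) :=
    fun k => contDiff_pi.mp hu k
  have husp : ∀ s, ∀ k : Fin d, ContDiff ℝ 2 (fun y => u s y k) := fun s k =>
    (hucomp k).comp (contDiff_const.prodMk contDiff_id)
  have hcpsp : Differentiable ℝ (fun y => cp t y) :=
    (hcp.comp (contDiff_const.prodMk contDiff_id)).differentiable (by norm_num)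
  have hcmsp : Differentiable ℝ (fun y => cm t y) :=
    (hcm.comp (contDiff_const.prodMk contDiff_id)).differentiable (by norm_num)
  have dρ : ∀ s y, DifferentiableAt ℝ (fun z => ρ s z) y := fun s y =>
    ((hρsp s).differentiable (by norm_num)) y
  have du : ∀ s (k : Fin d) y, DifferentiableAt ℝ (fun z => u s z k) y := fun s k y =>
    ((husp s k).differentiable (by norm_num)) y
  have dpdρ : ∀ (y : Fin d → ℝ) (k : Fin d),
      DifferentiableAt ℝ (fun z => pd d k (fun w => ρ t w) z) y :=
    fun y k => (hasFDerivAt_pd (hρsp t) y k).differentiableAt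
  have dpdu : ∀ (k l : Fin d) (y : Fin d → ℝ),
      DifferentiableAt ℝ (fun z => pd d l (fun w => u t w k) z) y :=
    fun k l y => (hasFDerivAt_pd (husp t k) y l).differentiableAt
  -- Step A : time derivative term
  have hB : HasDerivAt (fun s => pd d i (fun y => ρ s y) x)
      (pd d i (fun y => deriv (fun s => ρ s y) t) x) t := hasDerivAt_pd_mixed hρ t x i
  have hT1 : deriv (fun s => ρ s x *
        (u s x i + 2 * (μ * pd d i (fun y => Real.log (ρ s y)) x))) t
      = deriv (fun s => ρ s x * u s x i) t
        + 2 * μ * pd d i (fun y => deriv (fun s => ρ s y) t) x := by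
    have heq : (fun s => ρ s x * (u s x i + 2 * (μ * pd d i (fun y => Real.log (ρ s y)) x)))
        = fun s => ρ s x * u s x i + (2 * μ) * pd d i (fun y => ρ s y) x := by
      funext s
      rw [pd_log (dρ s x) (hρpos s x) i]
      field_simp [(hρpos s x).ne']
    have hA : DifferentiableAt ℝ (fun s => ρ s x * u s x i) t := by
      have h1 : ContDiff ℝ 2 (fun s => ρ s x) := hρ.comp (contDiff_id.prodMk contDiff_const)
      have h2 : ContDiff ℝ 2 (fun s => u s x i) :=
        (hucomp i).comp (contDiff_id.prodMk contDiff_const)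
      exact ((h1.differentiable (by norm_num)).mul (h2.differentiable (by norm_num))) t
    rw [heq, deriv_fun_add hA (hB.differentiableAt.const_mul _),
      deriv_const_mul _ hB.differentiableAt, hB.deriv]
  -- Step B : convective term
  have hT2 : ∀ j : Fin d,
      pd d j (fun y => ρ t y *
        (u t y i + 2 * (μ * pd d i (fun z => Real.log (ρ t z)) y)) * u t y j) x
      = pd d j (fun y => ρ t y * u t y i * u t y j) x
        + 2 * μ * pd d j (fun y => pd d i (fun z => ρ t z) y * u t y j) x := by
    intro j
    have heq : (fun y => ρ t y *
          (u t y i + 2 * (μ * pd d i (fun z => Real.log (ρ t z)) y)) * u t y j)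
        = fun y => ρ t y * u t y i * u t y j
            + (2 * μ) * (pd d i (fun z => ρ t z) y * u t y j) := by
      funext y
      rw [pd_log (dρ t y) (hρpos t y) i]
      field_simp [(hρpos t y).ne']
    rw [heq, pd_add (((dρ t x).fun_mul (du t i x)).fun_mul (du t j x))
      (((dpdρ x i).fun_mul (du t j x)).const_mul _) j,
      pd_const_mul ((dpdρ x i).fun_mul (du t j x)) _ j]
  -- Step C : antisymmetric part
  have hT3 : ∀ j : Fin d,
      pd d j (fun y => ρ t y *
        ((pd d j (fun z => u t z i) y - pd d i (fun z => u t z j) y) / 2)) x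
      = pd d j (fun y => ρ t y *
          ((pd d j (fun z => u t z i) y + pd d i (fun z => u t z j) y) / 2)) x
        - pd d j (fun y => ρ t y * pd d i (fun z => u t z j) y) x := by
    intro j
    have heq : (fun y => ρ t y *
          ((pd d j (fun z => u t z i) y - pd d i (fun z => u t z j) y) / 2))
        = fun y => ρ t y *
            ((pd d j (fun z => u t z i) y + pd d i (fun z => u t z j) y) / 2)
            - ρ t y * pd d i (fun z => u t z j) y := by
      funext y; ring
    have hdiv : DifferentiableAt ℝ
        (fun y => (pd d j (fun z => u t z i) y + pd d i (fun z => u t z j) y) / 2) x :=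
      by
        simp only [div_eq_mul_inv]
        exact ((dpdu i j x).add (dpdu j i x)).mul_const _
    rw [heq, pd_sub ((dρ t x).fun_mul hdiv) ((dρ t x).fun_mul (dpdu j i x)) j]
  -- Step D : commuting derivatives and using mass conservation
  have hswap : ∀ j : Fin d,
      pd d j (fun y => pd d i (fun z => ρ t z) y * u t y j) x
        + pd d j (fun y => ρ t y * pd d i (fun z => u t z j) y) x
      = pd d i (fun y => pd d j (fun z => ρ t z * u t z j) y) x := by
    intro j
    have heq : (fun y => pd d i (fun z => ρ t z * u t z j) y)
        = fun y => pd d i (fun z => ρ t z) y * u t y j + ρ t y * pd d i (fun z => u t z j) y :=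
      funext fun y => pd_mul (dρ t y) (du t j y) i
    rw [← pd_pd_comm ((hρsp t).mul (husp t j)) x i j, heq,
      pd_add ((dpdρ x i).fun_mul (du t j x)) ((dρ t x).fun_mul (dpdu j i x)) j]
  have hswapSum :
      (∑ j, pd d j (fun y => pd d i (fun z => ρ t z) y * u t y j) x)
        + ∑ j, pd d j (fun y => ρ t y * pd d i (fun z => u t z j) y) x
      = ∑ j, pd d i (fun y => pd d j (fun z => ρ t z * u t z j) y) x := by
    rw [← Finset.sum_add_distrib]
    exact Finset.sum_congr rfl fun j _ => hswap j
  have hK : pd d i (fun y => deriv (fun s => ρ s y) t) x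
      + ∑ j, pd d i (fun y => pd d j (fun z => ρ t z * u t z j) y) x = 0 := by
    have hdiff1 : DifferentiableAt ℝ (fun y => deriv (fun s => ρ s y) t) x :=
      (hasFDerivAt_deriv_slice hρ t x).differentiableAt
    have hdiff2 : ∀ j : Fin d,
        DifferentiableAt ℝ (fun y => pd d j (fun z => ρ t z * u t z j) y) x :=
      fun j => (hasFDerivAt_pd ((hρsp t).mul (husp t j)) x j).differentiableAt
    have h0 : pd d i (fun y => deriv (fun s => ρ s y) t
        + ∑ j, pd d j (fun z => ρ t z * u t z j) y) x = 0 := by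
      have : (fun y => deriv (fun s => ρ s y) t
          + ∑ j, pd d j (fun z => ρ t z * u t z j) y) = fun _ => (0 : ℝ) :=
        funext fun y => hmass t y
      rw [this]
      simp [pd]
    rw [pd_add hdiff1 (by exact DifferentiableAt.fun_sum fun j _ => hdiff2 j) i,
      pd_sum hdiff2 i] at h0
    exact h0
  -- Step E : right-hand side
  have hRp : cp t x * pd d i (fun y => Real.log (cp t y) + e * ψ t y) x
      = pd d i (fun y => cp t y) x + cp t x * (e * pd d i (ψ t) x) := by
    rw [pd_add ((hcpsp x).log (hcppos t x).ne')
      ((((hψ t).differentiable (by norm_num)) x).const_mul e) i,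
      pd_log (hcpsp x) (hcppos t x) i, pd_const_mul (((hψ t).differentiable (by norm_num)) x) e i]
    field_simp [(hcppos t x).ne']
  have hRm : cm t x * pd d i (fun y => Real.log (cm t y) - e * ψ t y) x
      = pd d i (fun y => cm t y) x - cm t x * (e * pd d i (ψ t) x) := by
    rw [pd_sub ((hcmsp x).log (hcmpos t x).ne')
      ((((hψ t).differentiable (by norm_num)) x).const_mul e) i,
      pd_log (hcmsp x) (hcmpos t x) i, pd_const_mul (((hψ t).differentiable (by norm_num)) x) e i]
    field_simp [(hcmpos t x).ne']
  -- sums rewrites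
  have hsum2 : ∑ j, pd d j (fun y => ρ t y *
        (u t y i + 2 * (μ * pd d i (fun z => Real.log (ρ t z)) y)) * u t y j) x
      = (∑ j, pd d j (fun y => ρ t y * u t y i * u t y j) x)
        + 2 * μ * ∑ j, pd d j (fun y => pd d i (fun z => ρ t z) y * u t y j) x := by
    rw [Finset.mul_sum, ← Finset.sum_add_distrib]
    exact Finset.sum_congr rfl fun j _ => hT2 j
  have hsum3 : ∑ j, pd d j (fun y => ρ t y *
        ((pd d j (fun z => u t z i) y - pd d i (fun z => u t z j) y) / 2)) x
      = (∑ j, pd d j (fun y => ρ t y *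
          ((pd d j (fun z => u t z i) y + pd d i (fun z => u t z j) y) / 2)) x)
        - ∑ j, pd d j (fun y => ρ t y * pd d i (fun z => u t z j) y) x := by
    rw [← Finset.sum_sub_distrib]
    exact Finset.sum_congr rfl fun j _ => hT3 j
  have hmom' := hmom t x i
  rw [pd_add (hcpsp x) (hcmsp x) i] at hmom'
  have hpois' := hpois t x
  rw [hT1, hsum2, hsum3]
  linear_combination hmom' + (2 * μ) * hswapSum + (2 * μ) * hK
    - pd d i (ψ t) x * hpois' + hRp + hRm
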